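/- Let U ⊆ ℝ² be open and bounded with 0 ∉ ∂U, and let F: Ψ⁻¹(∂U) → ℝ² be continuous and 2π-periodic in the first variable. Then for every v = (v^θ, v^r) ∈ ℝ² with v^θ ∉ conv(2π·rot(F, ∂U)) — equivalently, v^θ/(2π) outside the convex hull of the rotation set of F on ∂U — one has 𝔇(F, U, v) = 0. In particular 𝔇(F, U, (2πi, 0)) = 0 for every integer i ∉ Σ(F, ∂U). -/

import Mathlib

/-!
On `∂U` the extension `g` only takes values `F p`, so the angular component of `g` on `∂U`
lies in `2π · rot(F, ∂U)`. If `v^θ / 2π` is outside the convex hull of `rot(F, ∂U)`, that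
hull lies strictly on one side of it, so `g(∂U)` lies in an open half-plane `{y^θ > v^θ}`
(or `{y^θ < v^θ}`) missing `v`. The straight-line homotopy from `g` to a constant in that
half-plane never hits `v` on `∂U`, and a constant map has degree zero at any value it does
not attain.
-/

noncomputable section

open Set Metric Bornology

/-- Clockwise polar coordinates `Ψ(θ, r) = (r cos θ, -r sin θ)`. -/
def PsiP (p : ℝ × ℝ) : ℝ × ℝ := (p.2 * Real.cos p.1, -(p.2 * Real.sin p.1))

/-- The set `Ψ⁻¹(E)` in the open half-plane (points with positive radius mapping into `E`). -/
def preE (E : Set (ℝ × ℝ)) : Set (ℝ × ℝ) := {p : ℝ × ℝ | 0 < p.2 ∧ PsiP p ∈ E}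

/-- `F` is `2π`-periodic in the first variable, on `Ψ⁻¹(E)`. -/
def PerOn (F : ℝ × ℝ → ℝ × ℝ) (E : Set (ℝ × ℝ)) : Prop :=
  ∀ p : ℝ × ℝ, p ∈ preE E → F (p.1 + 2 * Real.pi, p.2) = F p

/-- The rotation set `rot(F, E) = {F^θ(y)/(2π) : y ∈ Ψ⁻¹(E)}`. -/
def rotSet (F : ℝ × ℝ → ℝ × ℝ) (E : Set (ℝ × ℝ)) : Set ℝ :=
  {t : ℝ | ∃ p ∈ preE E, t = (F p).1 / (2 * Real.pi)}

/-- `Σ(F, E) = ℤ ∩ conv (rot(F, E))`. -/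
def SigmaSet (F : ℝ × ℝ → ℝ × ℝ) (E : Set (ℝ × ℝ)) : Set ℤ :=
  {n : ℤ | (n : ℝ) ∈ convexHull ℝ (rotSet F E)}

/-- `ν_i = (2πi, 0)`. -/
def nu (i : ℤ) : ℝ × ℝ := (2 * Real.pi * i, 0)

/-- A Brouwer degree theory on the plane, characterized by the classical axioms:
normalization, dependence only on boundary values, homotopy invariance, additivity,
and the solution property. -/
structure DegTheory where
  deg : (ℝ × ℝ → ℝ × ℝ) → Set (ℝ × ℝ) → ℝ × ℝ → ℤ
  deg_id : ∀ (U : Set (ℝ × ℝ)) (v : ℝ × ℝ), IsOpen U → IsBounded U → v ∈ U →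
    deg id U v = 1
  deg_congr : ∀ (g₁ g₂ : ℝ × ℝ → ℝ × ℝ) (U : Set (ℝ × ℝ)) (v : ℝ × ℝ),
    IsOpen U → IsBounded U → ContinuousOn g₁ (closure U) → ContinuousOn g₂ (closure U) →
    (∀ x ∈ frontier U, g₁ x = g₂ x) → (∀ x ∈ frontier U, g₁ x ≠ v) →
    deg g₁ U v = deg g₂ U v
  deg_homotopy : ∀ (H : (ℝ × ℝ) × ℝ → ℝ × ℝ) (U : Set (ℝ × ℝ)) (v : ℝ × ℝ),
    IsOpen U → IsBounded U →
    ContinuousOn H ((closure U) ×ˢ Icc (0:ℝ) 1) →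
    (∀ x ∈ frontier U, ∀ t ∈ Icc (0:ℝ) 1, H (x, t) ≠ v) →
    deg (fun x => H (x, 0)) U v = deg (fun x => H (x, 1)) U v
  deg_additive : ∀ (g : ℝ × ℝ → ℝ × ℝ) (U U₁ U₂ : Set (ℝ × ℝ)) (v : ℝ × ℝ),
    IsOpen U → IsOpen U₁ → IsOpen U₂ → IsBounded U →
    U₁ ⊆ U → U₂ ⊆ U → Disjoint U₁ U₂ → ContinuousOn g (closure U) →
    (∀ x ∈ closure U \ (U₁ ∪ U₂), g x ≠ v) →
    deg g U v = deg g U₁ v + deg g U₂ v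
  deg_exists : ∀ (g : ℝ × ℝ → ℝ × ℝ) (U : Set (ℝ × ℝ)) (v : ℝ × ℝ),
    IsOpen U → IsBounded U → ContinuousOn g (closure U) →
    deg g U v ≠ 0 → ∃ x ∈ U, g x = v

/-- `g : ℝ² → ℝ²` represents `F_ext ∘ Ψ⁻¹` for an admissible extension `F_ext` of `F`
(`F` being defined on `Ψ⁻¹(∂U)`): `g` is continuous on the plane and agrees with
`F ∘ Ψ⁻¹` on `∂U`.  (Via `F_ext = g ∘ Ψ`, this is equivalent to the existence of a
continuous extension `F_ext` of `F` to the closed half-plane which is `2π`-periodic in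
the first variable and constant on the line `r = 0`.) -/
def IsDExt (F : ℝ × ℝ → ℝ × ℝ) (U : Set (ℝ × ℝ)) (g : ℝ × ℝ → ℝ × ℝ) : Prop :=
  Continuous g ∧ ∀ p : ℝ × ℝ, p ∈ preE (frontier U) → g (PsiP p) = F p

/-- Euclidean open ball of radius `ρ` about the origin of the plane. -/
def ball2 (ρ : ℝ) : Set (ℝ × ℝ) := {x : ℝ × ℝ | x.1 ^ 2 + x.2 ^ 2 < ρ ^ 2}

/-- Euclidean circle of radius `ρ` about the origin of the plane. -/
def sphere2 (ρ : ℝ) : Set (ℝ × ℝ) := {x : ℝ × ℝ | x.1 ^ 2 + x.2 ^ 2 = ρ ^ 2}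

/-- Euclidean norm on the plane. -/
def sqnorm (x : ℝ × ℝ) : ℝ := Real.sqrt (x.1 ^ 2 + x.2 ^ 2)

/-- `Φ` is the (unique) lift, through the clockwise polar coordinates `Ψ`, of the
evolution map `φ` on `[0,T] × Ψ⁻¹(S)`: it is continuous, starts from the identity,
projects to `φ` via `Ψ`, stays in the open half-plane, and is equivariant under the
deck transformation `θ ↦ θ + 2π`. -/
def IsLiftOn (φ : ℝ → ℝ × ℝ → ℝ × ℝ) (Φ : ℝ → ℝ × ℝ → ℝ × ℝ) (T : ℝ)
    (S : Set (ℝ × ℝ)) : Prop :=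
  ContinuousOn (fun q : ℝ × (ℝ × ℝ) => Φ q.1 q.2) (Icc 0 T ×ˢ preE S) ∧
  (∀ p ∈ preE S, Φ 0 p = p) ∧
  (∀ t ∈ Icc 0 T, ∀ p ∈ preE S,
    PsiP (Φ t p) = φ t (PsiP p) ∧ 0 < (Φ t p).2 ∧
    Φ t (p.1 + 2 * Real.pi, p.2) = ((Φ t p).1 + 2 * Real.pi, (Φ t p).2))

lemma exists_psiP_eq_of_ne_zero {x : ℝ × ℝ} (hx : x ≠ 0) : ∃ p : ℝ × ℝ, 0 < p.2 ∧ PsiP p = x := by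
  set z : ℂ := ⟨x.1, x.2⟩
  have hz : z ≠ 0 := fun h => hx (Prod.ext (congrArg Complex.re h) (congrArg Complex.im h))
  refine ⟨(-z.arg, ‖z‖), norm_pos_iff.mpr hz, ?_⟩
  simp only [PsiP, Real.cos_neg, Real.sin_neg, mul_neg, neg_neg, Complex.norm_mul_cos_arg,
    Complex.norm_mul_sin_arg]
  rfl

lemma IsDExt.fst_div_mem_rotSet {F g : ℝ × ℝ → ℝ × ℝ} {U : Set (ℝ × ℝ)} (hg : IsDExt F U g)
    (h0 : (0 : ℝ × ℝ) ∉ frontier U) {x : ℝ × ℝ} (hx : x ∈ frontier U) :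
    (g x).1 / (2 * Real.pi) ∈ rotSet F (frontier U) := by
  obtain ⟨p, hp, rfl⟩ := exists_psiP_eq_of_ne_zero (ne_of_mem_of_not_mem hx h0)
  exact ⟨p, ⟨hp, hx⟩, by rw [hg.2 p ⟨hp, hx⟩]⟩

lemma Convex.forall_lt_or_forall_gt_of_notMem {s : Set ℝ} (hs : Convex ℝ s) {a : ℝ}
    (ha : a ∉ s) : (∀ x ∈ s, a < x) ∨ (∀ x ∈ s, x < a) := by
  by_contra! h
  obtain ⟨⟨x, hx, hxa⟩, ⟨y, hy, hay⟩⟩ := h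
  exact ha (hs.ordConnected.out hx hy ⟨hxa, hay⟩)

namespace DegTheory

variable (D : DegTheory) {U : Set (ℝ × ℝ)} {g : ℝ × ℝ → ℝ × ℝ} {v : ℝ × ℝ}

lemma deg_const_eq_zero (hU : IsOpen U) (hUb : IsBounded U) {c : ℝ × ℝ} (hc : c ≠ v) :
    D.deg (fun _ => c) U v = 0 := by
  by_contra hdeg
  obtain ⟨_, _, hcv⟩ := D.deg_exists _ U v hU hUb continuousOn_const hdeg
  exact hc hcv

lemma deg_eq_zero_of_mapsTo_convex (hU : IsOpen U) (hUb : IsBounded U)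
    (hg : ContinuousOn g (closure U)) {K : Set (ℝ × ℝ)} (hK : Convex ℝ K) (hvK : v ∉ K)
    {c : ℝ × ℝ} (hc : c ∈ K) (hgK : MapsTo g (frontier U) K) : D.deg g U v = 0 := by
  let H : (ℝ × ℝ) × ℝ → ℝ × ℝ := fun q => (1 - q.2) • g q.1 + q.2 • c
  have hH : ContinuousOn H (closure U ×ˢ Icc 0 1) :=
    ((continuousOn_const.sub continuousOn_snd).smul
      (hg.comp continuousOn_fst fun _ hq => hq.1)).add (continuousOn_snd.smul continuousOn_const)
  have hHv : ∀ x ∈ frontier U, ∀ t ∈ Icc (0 : ℝ) 1, H (x, t) ≠ v := by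
    intro x hx t ht hxt
    have hseg : H (x, t) ∈ segment ℝ (g x) c := by
      rw [segment_eq_image]
      exact ⟨t, ht, rfl⟩
    exact hvK (hxt ▸ hK.segment_subset (hgK hx) hc hseg)
  have hH0 : (fun x => H (x, 0)) = g := funext fun x => by simp [H]
  have hH1 : (fun x => H (x, 1)) = fun _ => c := funext fun x => by simp [H]
  rw [← hH0, D.deg_homotopy H U v hU hUb hH hHv, hH1]
  exact D.deg_const_eq_zero hU hUb (ne_of_mem_of_not_mem hc hvK)

lemma deg_eq_zero_of_frontier_fst_separated (hU : IsOpen U) (hUb : IsBounded U)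
    (hg : ContinuousOn g (closure U))
    (hsep : (∀ x ∈ frontier U, v.1 < (g x).1) ∨ (∀ x ∈ frontier U, (g x).1 < v.1)) :
    D.deg g U v = 0 := by
  rcases hsep with hgt | hlt
  · exact D.deg_eq_zero_of_mapsTo_convex hU hUb hg ((convex_Ioi v.1).linear_preimage
      (LinearMap.fst ℝ ℝ ℝ)) (lt_irrefl v.1) (c := (v.1 + 1, 0)) (lt_add_one v.1) hgt
  · exact D.deg_eq_zero_of_mapsTo_convex hU hUb hg ((convex_Iio v.1).linear_preimage
      (LinearMap.fst ℝ ℝ ℝ)) (lt_irrefl v.1) (c := (v.1 - 1, 0)) (sub_one_lt v.1) hlt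

end DegTheory

lemma nu_fst_div_two_pi (i : ℤ) : (nu i).1 / (2 * Real.pi) = i := by
  simp only [nu]
  field_simp [Real.pi_ne_zero]

theorem statement9_general (D : DegTheory) (U : Set (ℝ × ℝ)) (F : ℝ × ℝ → ℝ × ℝ)
    (hU : IsOpen U) (hUb : IsBounded U) (h0 : (0 : ℝ × ℝ) ∉ frontier U) :
    (∀ v : ℝ × ℝ, v.1 / (2 * Real.pi) ∉ convexHull ℝ (rotSet F (frontier U)) →
      ∀ g : ℝ × ℝ → ℝ × ℝ, IsDExt F U g → D.deg g U v = 0) ∧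
    (∀ i : ℤ, i ∉ SigmaSet F (frontier U) →
      ∀ g : ℝ × ℝ → ℝ × ℝ, IsDExt F U g → D.deg g U (nu i) = 0) := by
  have main : ∀ v : ℝ × ℝ, v.1 / (2 * Real.pi) ∉ convexHull ℝ (rotSet F (frontier U)) →
      ∀ g : ℝ × ℝ → ℝ × ℝ, IsDExt F U g → D.deg g U v = 0 := by
    intro v hv g hg
    have hrot x (hx : x ∈ frontier U) : (g x).1 / (2 * Real.pi) ∈ convexHull ℝ _ :=
      subset_convexHull ℝ _ (hg.fst_div_mem_rotSet h0 hx)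
    refine D.deg_eq_zero_of_frontier_fst_separated hU hUb hg.1.continuousOn ?_
    rcases (convex_convexHull ℝ _).forall_lt_or_forall_gt_of_notMem hv with hgt | hlt
    · exact .inl fun x hx => (div_lt_div_iff_of_pos_right Real.two_pi_pos).1 (hgt _ (hrot x hx))
    · exact .inr fun x hx => (div_lt_div_iff_of_pos_right Real.two_pi_pos).1 (hlt _ (hrot x hx))
  refine ⟨main, fun i hi g hg => main (nu i) ?_ g hg⟩
  rwa [nu_fst_div_two_pi]

/-- `𝔇(F,U,v) = 0` whenever `v^θ/(2π)` lies outside the convex hull of the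
rotation set of `F` on `∂U`; in particular `𝔇(F,U,ν_i) = 0` for every integer
`i ∉ Σ(F,∂U)`. -/
theorem statement9 (D : DegTheory) (U : Set (ℝ × ℝ)) (F : ℝ × ℝ → ℝ × ℝ)
    (hU : IsOpen U) (hUb : IsBounded U) (h0 : (0 : ℝ × ℝ) ∉ frontier U)
    (hFc : ContinuousOn F (preE (frontier U))) (hFper : PerOn F (frontier U)) :
    (∀ v : ℝ × ℝ, v.1 / (2 * Real.pi) ∉ convexHull ℝ (rotSet F (frontier U)) →
      ∀ g : ℝ × ℝ → ℝ × ℝ, IsDExt F U g → D.deg g U v = 0) ∧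
    (∀ i : ℤ, i ∉ SigmaSet F (frontier U) →
      ∀ g : ℝ × ℝ → ℝ × ℝ, IsDExt F U g → D.deg g U (nu i) = 0) :=
  statement9_general D U F hU hUb h0
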